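/- Let Q ∈ ℝ^{M×M} be the block diagonal matrix with K identical one-factor blocks Q(ρ) = (1-ρ)I_{M_c} + ρ·e_c e_c^T where M = K·M_c and ρ = 2h/((M_c−1)M). Then Q has all diagonal entries 1, its above-diagonal entries sum to h, and λ_max(Q) = 1 + 2h/M, which equals the largest eigenvalue of the one-factor matrix in A_h^M. -/

import Mathlib

/-!
`Q` has nonnegative entries and every row sums to `1 + (M_c - 1)ρ = 1 + 2h/M`. By Gershgorin no
eigenvalue exceeds this common row sum, and the all-ones vector is an eigenvector for it. Since `Q`
is symmetric, its total entry sum `M + 2h` is the trace `M` plus twice the above-diagonal sum.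
-/

open Matrix Finset

theorem Fin.card_filter_div_eq {n c : ℕ} (hc : 0 < c) (hcn : c ∣ n) (i : Fin n) :
    #{j : Fin n | (j : ℕ) / c = i / c} = c := by
  set q := (i : ℕ) / c
  have hq : q * c + c ≤ n := by
    obtain ⟨m, hm⟩ := hcn
    have : q < m := Nat.div_lt_of_lt_mul (hm ▸ i.isLt)
    nlinarith
  have hblock : (univ.filter fun j : Fin n => (j : ℕ) / c = q).map valEmbedding
      = Ico (q * c) (q * c + c) := by
    ext m
    simp only [mem_map, mem_filter, mem_univ, true_and, valEmbedding_apply, mem_Ico,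
      Fin.exists_iff]
    constructor
    · rintro ⟨m, _, hmq, rfl⟩
      rw [Nat.div_eq_iff hc] at hmq
      omega
    · intro hm
      exact ⟨m, by omega, (Nat.div_eq_iff hc).2 (by omega), rfl⟩
  rw [← card_map valEmbedding, hblock, Nat.card_Ico, Nat.add_sub_cancel_left]

namespace Matrix

variable {n R : Type*} [Fintype n]

theorem IsSymm.sum_eq_trace_add_two_mul_sum_lower [LinearOrder n] [NonAssocSemiring R]
    {A : Matrix n n R} (hA : A.IsSymm) :
    ∑ i, ∑ j, A i j = A.trace + 2 * ∑ j, ∑ i ∈ univ.filter (fun i => j < i), A i j := by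
  have hsplit : ∀ i j, A i j =
      (if i = j then A i j else 0) + (if j < i then A i j else 0) + (if i < j then A i j else 0) := by
    intro i j
    rcases lt_trichotomy i j with hij | rfl | hji
    · simp [hij, hij.ne, hij.not_gt]
    · simp
    · simp [hji, hji.ne', hji.not_gt]
  have hlower : ∑ i, ∑ j ∈ univ.filter (· < i), A i j = ∑ j, ∑ i ∈ univ.filter (j < ·), A i j :=
    sum_comm' (by simp)
  have hupper : ∑ i, ∑ j ∈ univ.filter (i < ·), A i j = ∑ j, ∑ i ∈ univ.filter (j < ·), A i j :=
    sum_congr rfl fun i _ => sum_congr rfl fun j _ => hA.apply j i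
  rw [sum_congr rfl fun i _ => sum_congr rfl fun j _ => hsplit i j]
  simp only [sum_add_distrib, sum_ite_eq, mem_univ, if_true, ← sum_filter, hlower, hupper]
  rw [trace, two_mul, ← add_assoc]
  rfl

variable [DecidableEq n]

theorem hasEigenvalue_toLin'_iff_mem_spectrum [Field R] {A : Matrix n n R} {μ : R} :
    Module.End.HasEigenvalue (toLin' A) μ ↔ μ ∈ spectrum R A := by
  rw [Module.End.hasEigenvalue_iff_mem_spectrum, spectrum_toLin']

theorem hasEigenvalue_toLin'_of_sum_row_eq [Nonempty n] [Field R] {A : Matrix n n R} {r : R}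
    (hrow : ∀ i, ∑ j, A i j = r) : Module.End.HasEigenvalue (toLin' A) r := by
  refine Module.End.hasEigenvalue_of_hasEigenvector (x := 1)
    ⟨Module.End.mem_eigenspace_iff.mpr ?_, one_ne_zero⟩
  ext i
  simp [mulVec, dotProduct, hrow]

theorem eigenvalue_le_of_nonneg_of_sum_row_le {A : Matrix n n ℝ} {r μ : ℝ}
    (hA : ∀ i j, 0 ≤ A i j) (hrow : ∀ i, ∑ j, A i j ≤ r)
    (hμ : Module.End.HasEigenvalue (toLin' A) μ) : μ ≤ r := by
  obtain ⟨k, hk⟩ := eigenvalue_mem_ball hμ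
  rw [Metric.mem_closedBall, Real.dist_eq] at hk
  have hradius : ∑ j ∈ univ.erase k, ‖A k j‖ = ∑ j, A k j - A k k := by
    rw [← sum_erase_add _ _ (mem_univ k), add_sub_cancel_right]
    exact sum_congr rfl fun j _ => Real.norm_of_nonneg (hA k j)
  linarith [(abs_le.mp hk).2, hrow k]

theorem IsHermitian.iSup_eigenvalues_eq_of_nonneg_of_sum_row_eq [Nonempty n]
    {A : Matrix n n ℝ} (hA : A.IsHermitian) {r : ℝ} (hnonneg : ∀ i j, 0 ≤ A i j)
    (hrow : ∀ i, ∑ j, A i j = r) : ⨆ i, hA.eigenvalues i = r := by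
  have hle : ∀ i, hA.eigenvalues i ≤ r := fun i =>
    eigenvalue_le_of_nonneg_of_sum_row_le hnonneg (fun k => (hrow k).le)
      (hasEigenvalue_toLin'_iff_mem_spectrum.mpr (hA.eigenvalues_mem_spectrum_real i))
  obtain ⟨i₀, hi₀⟩ : r ∈ Set.range hA.eigenvalues := by
    rw [← hA.spectrum_real_eq_range_eigenvalues, ← hasEigenvalue_toLin'_iff_mem_spectrum]
    exact hasEigenvalue_toLin'_of_sum_row_eq hrow
  exact le_antisymm (ciSup_le hle) (hi₀ ▸ le_ciSup (Set.finite_range _).bddAbove i₀)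

end Matrix

/-- Indices `i, j` lie in the same diagonal block iff `i / c = j / c`; each block is
`(1 - ρ) I + ρ e eᵀ`. -/
def blockOneFactor {R : Type*} [Zero R] [One R] {n : ℕ} (c : ℕ) (ρ : R) :
    Matrix (Fin n) (Fin n) R :=
  of fun i j => if (i : ℕ) / c = (j : ℕ) / c then (if i = j then 1 else ρ) else 0

section blockOneFactor

variable {R : Type*} {n c : ℕ}

theorem blockOneFactor_apply_self [Zero R] [One R] (ρ : R) (i : Fin n) :
    blockOneFactor c ρ i i = 1 := by
  simp [blockOneFactor]

theorem blockOneFactor_nonneg [Zero R] [One R] [Preorder R] [ZeroLEOneClass R] {ρ : R}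
    (hρ : 0 ≤ ρ) (i j : Fin n) : 0 ≤ blockOneFactor c ρ i j := by
  simp only [blockOneFactor, of_apply]
  split_ifs <;> simp [hρ, zero_le_one]

theorem sum_blockOneFactor_row [Ring R] (hc : 0 < c) (hcn : c ∣ n) (ρ : R) (i : Fin n) :
    ∑ j, blockOneFactor c ρ i j = 1 + ((c : R) - 1) * ρ := by
  have hi : i ∈ univ.filter fun j : Fin n => (i : ℕ) / c = (j : ℕ) / c := by simp
  have hoff : ∀ j ∈ (univ.filter fun j : Fin n => (i : ℕ) / c = (j : ℕ) / c).erase i,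
      (if i = j then (1 : R) else ρ) = ρ := fun j hj => if_neg (ne_of_mem_erase hj).symm
  have hcard : #(univ.filter fun j : Fin n => (i : ℕ) / c = (j : ℕ) / c) = c := by
    simpa only [eq_comm] using Fin.card_filter_div_eq hc hcn i
  simp only [blockOneFactor, of_apply]
  rw [← sum_filter, ← add_sum_erase _ _ hi, if_pos rfl, sum_congr rfl hoff, sum_const,
    card_erase_of_mem hi, hcard, nsmul_eq_mul, Nat.cast_pred hc]

end blockOneFactor

theorem stmt7_general (K Mc : ℕ) (hK : 0 < K) (hMc : 2 ≤ Mc) (Mtot : ℕ) (hM : Mtot = K * Mc)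
    (h ρ : ℝ) (hρdef : ρ = 2 * h / (((Mc : ℝ) - 1) * (Mtot : ℝ)))
    (hρ0 : 0 < ρ)
    (Q : Matrix (Fin Mtot) (Fin Mtot) ℝ)
    (hQ : ∀ i j : Fin Mtot, Q i j =
      if (i : ℕ) / Mc = (j : ℕ) / Mc then (if i = j then 1 else ρ) else 0)
    (hherm : Q.IsHermitian) :
    (∀ i, Q i i = 1) ∧
    (∑ j : Fin Mtot, ∑ i ∈ Finset.univ.filter (fun i : Fin Mtot => j < i), Q i j = h) ∧
    (⨆ i, hherm.eigenvalues i) = 1 + 2 * h / (Mtot : ℝ) := by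
  obtain rfl : Q = blockOneFactor Mc ρ := Matrix.ext hQ
  have hMtot : 0 < Mtot := hM ▸ Nat.mul_pos hK (by omega)
  have : Nonempty (Fin Mtot) := ⟨⟨0, hMtot⟩⟩
  have hrow : ∀ i : Fin Mtot, ∑ j, blockOneFactor Mc ρ i j = 1 + 2 * h / Mtot := by
    have hMc1 : (Mc : ℝ) - 1 ≠ 0 := by
      have : (2 : ℝ) ≤ Mc := by exact_mod_cast hMc
      linarith
    intro i
    rw [sum_blockOneFactor_row (by omega) (hM ▸ dvd_mul_left Mc K), hρdef]
    field_simp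
  refine ⟨blockOneFactor_apply_self ρ, ?_, ?_⟩
  · have hsum := (isHermitian_iff_isSymm.mp hherm).sum_eq_trace_add_two_mul_sum_lower
    simp only [hrow, trace, diag_apply, blockOneFactor_apply_self, sum_const, card_univ,
      Fintype.card_fin, nsmul_eq_mul] at hsum
    have : (Mtot : ℝ) ≠ 0 := by positivity
    field_simp at hsum
    linarith
  · exact hherm.iSup_eigenvalues_eq_of_nonneg_of_sum_row_eq (blockOneFactor_nonneg hρ0.le) hrow

theorem stmt7 (K Mc : ℕ) (hK : 0 < K) (hMc : 2 ≤ Mc) (Mtot : ℕ) (hM : Mtot = K * Mc)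
    (h ρ : ℝ) (hρdef : ρ = 2 * h / (((Mc : ℝ) - 1) * (Mtot : ℝ)))
    (hρ0 : 0 < ρ) (hρ1 : ρ < 1)
    (Q : Matrix (Fin Mtot) (Fin Mtot) ℝ)
    (hQ : ∀ i j : Fin Mtot, Q i j =
      if (i : ℕ) / Mc = (j : ℕ) / Mc then (if i = j then 1 else ρ) else 0)
    (hherm : Q.IsHermitian) :
    (∀ i, Q i i = 1) ∧
    (∑ j : Fin Mtot, ∑ i ∈ Finset.univ.filter (fun i : Fin Mtot => j < i), Q i j = h) ∧
    (⨆ i, hherm.eigenvalues i) = 1 + 2 * h / (Mtot : ℝ) :=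
  stmt7_general K Mc hK hMc Mtot hM h ρ hρdef hρ0 Q hQ hherm
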